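/- For the charged-Nariai-type metric, the Ricci tensor is Riemann compatible and projectively compatible: the cyclic sums over (p,q,r) of S^t_p R_{qrst} and of S^t_p P_{qrst} vanish identically on the whole domain, for arbitrary smooth nowhere-vanishing ξ and h. -/
import Mathlib


noncomputable section

open Real

/-- Partial derivative of `f` in the `i`-th coordinate direction at the point `x`. -/
def pd (i : Fin 4) (f : (Fin 4 → ℝ) → ℝ) (x : Fin 4 → ℝ) : ℝ :=
  deriv (fun s => f (Function.update x i s)) (x i)

/-- The charged-Nariai-type metric: coordinates `x 0 = t`, `x 1 = r`, `x 2 = θ`, `x 3 = φ`;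
nonzero components `g₁₁ = -(r₀²/L₀) ξ(r)²`, `g₂₂ = r₀²/L₀`, `g₃₃ = r₀²`, `g₄₄ = r₀² h(θ)²`. -/
def gT (r0 L0 : ℝ) (ξ h : ℝ → ℝ) (x : Fin 4 → ℝ) : Fin 4 → Fin 4 → ℝ := fun p q =>
  if p = 0 ∧ q = 0 then -(r0 ^ 2 / L0) * ξ (x 1) ^ 2
  else if p = 1 ∧ q = 1 then r0 ^ 2 / L0
  else if p = 2 ∧ q = 2 then r0 ^ 2
  else if p = 3 ∧ q = 3 then r0 ^ 2 * h (x 2) ^ 2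
  else 0

/-- Inverse of a diagonal metric. -/
def ginv (g : (Fin 4 → ℝ) → Fin 4 → Fin 4 → ℝ) (x : Fin 4 → ℝ) : Fin 4 → Fin 4 → ℝ :=
  fun p q => if p = q then (g x p p)⁻¹ else 0

/-- Christoffel symbols `Γ^a_{bc}` of the Levi-Civita connection of a diagonal metric. -/
def Chr (g : (Fin 4 → ℝ) → Fin 4 → Fin 4 → ℝ) (x : Fin 4 → ℝ) (a b c : Fin 4) : ℝ :=
  (1 / 2) * ∑ d : Fin 4, ginv g x a d *
    (pd b (fun y => g y d c) x + pd c (fun y => g y d b) x - pd d (fun y => g y b c) x)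

/-- Covariant derivative `∇_a T_{pq}` of a (0,2)-tensor field. -/
def covDeriv2 (g T : (Fin 4 → ℝ) → Fin 4 → Fin 4 → ℝ) (x : Fin 4 → ℝ) (a p q : Fin 4) : ℝ :=
  pd a (fun y => T y p q) x
    - ∑ e : Fin 4, Chr g x e a p * T x e q
    - ∑ e : Fin 4, Chr g x e a q * T x p e

/-- Covariant derivative `∇_a T_{pqrs}` of a (0,4)-tensor field. -/
def covDeriv4 (g : (Fin 4 → ℝ) → Fin 4 → Fin 4 → ℝ)
    (T : (Fin 4 → ℝ) → Fin 4 → Fin 4 → Fin 4 → Fin 4 → ℝ)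
    (x : Fin 4 → ℝ) (a p q r s : Fin 4) : ℝ :=
  pd a (fun y => T y p q r s) x
    - ∑ e : Fin 4, Chr g x e a p * T x e q r s
    - ∑ e : Fin 4, Chr g x e a q * T x p e r s
    - ∑ e : Fin 4, Chr g x e a r * T x p q e s
    - ∑ e : Fin 4, Chr g x e a s * T x p q r e

/-- Elementary (0,4)-tensor with the usual Riemann symmetries, supported on the
coordinate plane `(a,b)` and normalized so that its `(a,b,a,b)` component is `1`. -/
def blk (a b : Fin 4) (p q r s : Fin 4) : ℝ :=
  (if p = a ∧ q = b then (1 : ℝ) else if p = b ∧ q = a then -1 else 0) *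
  (if r = a ∧ s = b then (1 : ℝ) else if r = b ∧ s = a then -1 else 0)

/-- The (0,4) Riemann curvature tensor of the charged-Nariai-type metric:
`R₁₂₁₂ = -(r₀²/L₀) ξ ξ″`, `R₃₄₃₄ = r₀² h h″` (up to the Riemann symmetries). -/
def RT (r0 L0 : ℝ) (ξ h : ℝ → ℝ) (x : Fin 4 → ℝ) (p q r s : Fin 4) : ℝ :=
  (-(r0 ^ 2 / L0) * ξ (x 1) * deriv (deriv ξ) (x 1)) * blk 0 1 p q r s
    + (r0 ^ 2 * h (x 2) * deriv (deriv h) (x 2)) * blk 2 3 p q r s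

/-- The Ricci tensor of the charged-Nariai-type metric:
`S₁₁ = -ξξ″`, `S₂₂ = ξ″/ξ`, `S₃₃ = h″/h`, `S₄₄ = hh″`. -/
def SRicT (ξ h : ℝ → ℝ) (x : Fin 4 → ℝ) : Fin 4 → Fin 4 → ℝ := fun p q =>
  if p = 0 ∧ q = 0 then -(ξ (x 1) * deriv (deriv ξ) (x 1))
  else if p = 1 ∧ q = 1 then deriv (deriv ξ) (x 1) / ξ (x 1)
  else if p = 2 ∧ q = 2 then deriv (deriv h) (x 2) / h (x 2)
  else if p = 3 ∧ q = 3 then h (x 2) * deriv (deriv h) (x 2)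
  else 0

/-- The scalar curvature of the charged-Nariai-type metric:
`κ = 2(L₀hξ″ + ξh″)/(r₀²ξh)`. -/
def κT (r0 L0 : ℝ) (ξ h : ℝ → ℝ) (x : Fin 4 → ℝ) : ℝ :=
  2 * (L0 * h (x 2) * deriv (deriv ξ) (x 1) + ξ (x 1) * deriv (deriv h) (x 2)) /
    (r0 ^ 2 * ξ (x 1) * h (x 2))

/-- Kulkarni–Nomizu product of two symmetric (0,2)-tensors. -/
def KN (E A : Fin 4 → Fin 4 → ℝ) (p q r s : Fin 4) : ℝ :=
  E p s * A q r - E p r * A q s + E q r * A p s - E q s * A p r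

/-- The (0,4) Weyl conformal curvature tensor of the charged-Nariai-type metric. -/
def CT (r0 L0 : ℝ) (ξ h : ℝ → ℝ) (x : Fin 4 → ℝ) (p q r s : Fin 4) : ℝ :=
  RT r0 L0 ξ h x p q r s
    + (1 / 2) * (gT r0 L0 ξ h x p s * SRicT ξ h x q r - gT r0 L0 ξ h x q s * SRicT ξ h x p r
        + SRicT ξ h x p s * gT r0 L0 ξ h x q r - SRicT ξ h x q s * gT r0 L0 ξ h x p r)
    - (κT r0 L0 ξ h x / 6) * (gT r0 L0 ξ h x p s * gT r0 L0 ξ h x q r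
        - gT r0 L0 ξ h x q s * gT r0 L0 ξ h x p r)

/-- The (0,4) projective curvature tensor of the charged-Nariai-type metric (n = 4). -/
def PT (r0 L0 : ℝ) (ξ h : ℝ → ℝ) (x : Fin 4 → ℝ) (p q r s : Fin 4) : ℝ :=
  RT r0 L0 ξ h x p q r s
    + (1 / 3) * (gT r0 L0 ξ h x p s * SRicT ξ h x q r - gT r0 L0 ξ h x q s * SRicT ξ h x p r)

/-- The (0,6)-tensor `(U·T)_{pqrs,uv}` built from two (0,4)-tensor fields. -/
def dot4 (g : (Fin 4 → ℝ) → Fin 4 → Fin 4 → ℝ)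
    (U T : (Fin 4 → ℝ) → Fin 4 → Fin 4 → Fin 4 → Fin 4 → ℝ)
    (x : Fin 4 → ℝ) (p q r s u v : Fin 4) : ℝ :=
  - ∑ α : Fin 4, ∑ β : Fin 4, ginv g x α β *
      (U x u v p β * T x α q r s + U x u v q β * T x p α r s
        + U x u v r β * T x p q α s + U x u v s β * T x p q r α)

/-- The Tachibana tensor `Q(Z,T)_{pqrs,uv}`. -/
def Qop (Z : Fin 4 → Fin 4 → ℝ) (T : Fin 4 → Fin 4 → Fin 4 → Fin 4 → ℝ)
    (p q r s u v : Fin 4) : ℝ :=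
  Z v p * T u q r s + Z v q * T p u r s + Z v r * T p q u s + Z v s * T p q r u
    - Z u p * T v q r s - Z u q * T p v r s - Z u r * T p q v s - Z u s * T p q r v

/-- The Ricci operator `S^t_p = g^{tα} S_{αp}` of a metric `g` with Ricci tensor `S`. -/
def Sop (g S : (Fin 4 → ℝ) → Fin 4 → Fin 4 → ℝ) (x : Fin 4 → ℝ) (t p : Fin 4) : ℝ :=
  ∑ a : Fin 4, ginv g x t a * S x a p

/-- `ω(f) = f′f″ - ff‴`. -/
def omg (f : ℝ → ℝ) (t : ℝ) : ℝ :=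
  deriv f t * deriv (deriv f) t - f t * deriv (deriv (deriv f)) t

/-- `Ω = L₀hξ″ - ξh″`. -/
def ΩT (L0 : ℝ) (ξ h : ℝ → ℝ) (x : Fin 4 → ℝ) : ℝ :=
  L0 * h (x 2) * deriv (deriv ξ) (x 1) - ξ (x 1) * deriv (deriv h) (x 2)


/-- Diagonal (0,2)-tensor helper. -/
def diag4 (d : Fin 4 → ℝ) (a b : Fin 4) : ℝ := if a = b then d a else 0

set_option maxHeartbeats 1000000 in
lemma keyP (m n X Y : ℝ) (d e : Fin 4 → ℝ) (p q r s : Fin 4) :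
    ![m,m,n,n] p * (X * blk 0 1 q r s p + Y * blk 2 3 q r s p
        + (1/3) * (diag4 d q p * diag4 e r s - diag4 d r p * diag4 e q s))
  + ![m,m,n,n] q * (X * blk 0 1 r p s q + Y * blk 2 3 r p s q
        + (1/3) * (diag4 d r q * diag4 e p s - diag4 d p q * diag4 e r s))
  + ![m,m,n,n] r * (X * blk 0 1 p q s r + Y * blk 2 3 p q s r
        + (1/3) * (diag4 d p r * diag4 e q s - diag4 d q r * diag4 e p s)) = 0 := by
  fin_cases p <;> fin_cases q <;> fin_cases r <;> fin_cases s <;>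
    simp [blk, diag4] <;> ring

set_option maxHeartbeats 1600000 in
/-- For the charged-Nariai-type metric, the Ricci tensor is Riemann
compatible and projectively compatible on the whole domain, for arbitrary smooth
nowhere-vanishing `ξ` and `h`. -/
theorem cnt_riemann_projective_compatible (r0 L0 : ℝ) (ξ h : ℝ → ℝ)
    (hr0 : 0 < r0) (hL0 : 0 < L0) (hL1 : L0 ≤ 1)
    (hξ : ContDiff ℝ (⊤ : ℕ∞) ξ) (hξ0 : ∀ t : ℝ, ξ t ≠ 0)
    (hh : ContDiff ℝ (⊤ : ℕ∞) h) (hh0 : ∀ t : ℝ, h t ≠ 0)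
    (x : Fin 4 → ℝ) (p q r s : Fin 4) :
    (∑ t : Fin 4, (Sop (gT r0 L0 ξ h) (SRicT ξ h) x t p * RT r0 L0 ξ h x q r s t
      + Sop (gT r0 L0 ξ h) (SRicT ξ h) x t q * RT r0 L0 ξ h x r p s t
      + Sop (gT r0 L0 ξ h) (SRicT ξ h) x t r * RT r0 L0 ξ h x p q s t) = 0) ∧
    (∑ t : Fin 4, (Sop (gT r0 L0 ξ h) (SRicT ξ h) x t p * PT r0 L0 ξ h x q r s t
      + Sop (gT r0 L0 ξ h) (SRicT ξ h) x t q * PT r0 L0 ξ h x r p s t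
      + Sop (gT r0 L0 ξ h) (SRicT ξ h) x t r * PT r0 L0 ξ h x p q s t) = 0) := by
  set a := ξ (x 1) with ha
  set A := deriv (deriv ξ) (x 1) with hA
  set c := h (x 2) with hc
  set C := deriv (deriv h) (x 2) with hC
  have ha0 : a ≠ 0 := hξ0 _
  have hc0 : c ≠ 0 := hh0 _
  have hr0' : r0 ≠ 0 := ne_of_gt hr0
  have hL0' : L0 ≠ 0 := ne_of_gt hL0
  set m := L0 * A / (r0 ^ 2 * a) with hm
  set n := C / (r0 ^ 2 * c) with hn
  set dv : Fin 4 → ℝ := ![-(r0 ^ 2 / L0) * a ^ 2, r0 ^ 2 / L0, r0 ^ 2, r0 ^ 2 * c ^ 2] with hdv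
  set ev : Fin 4 → ℝ := ![-(a * A), A / a, C / c, c * C] with hev
  have gTeq : ∀ u v : Fin 4, gT r0 L0 ξ h x u v = diag4 dv u v := by
    intro u v
    fin_cases u <;> fin_cases v <;> simp [gT, diag4, hdv, ← ha, ← hc]
  have Seq : ∀ u v : Fin 4, SRicT ξ h x u v = diag4 ev u v := by
    intro u v
    fin_cases u <;> fin_cases v <;> simp [SRicT, diag4, hev, ← ha, ← hA, ← hc, ← hC]
  have SopEq : ∀ t u : Fin 4, Sop (gT r0 L0 ξ h) (SRicT ξ h) x t u
      = ![m, m, n, n] t * (if t = u then 1 else 0) := by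
    intro t u
    simp only [Sop, ginv, Fin.sum_univ_four, gTeq, Seq]
    fin_cases t <;> fin_cases u <;>
      · simp [diag4, hdv, hev, hm, hn]
        try field_simp
        try ring
  have sumEq : ∀ (T : (Fin 4 → ℝ) → Fin 4 → Fin 4 → Fin 4 → Fin 4 → ℝ),
      (∑ t : Fin 4, (Sop (gT r0 L0 ξ h) (SRicT ξ h) x t p * T x q r s t
        + Sop (gT r0 L0 ξ h) (SRicT ξ h) x t q * T x r p s t
        + Sop (gT r0 L0 ξ h) (SRicT ξ h) x t r * T x p q s t))
      = ![m, m, n, n] p * T x q r s p + ![m, m, n, n] q * T x r p s q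
        + ![m, m, n, n] r * T x p q s r := by
    intro T
    simp only [SopEq, Fin.sum_univ_four]
    fin_cases p <;> fin_cases q <;> fin_cases r <;> · simp; try ring
  have RTeq : ∀ p' q' r' s' : Fin 4, RT r0 L0 ξ h x p' q' r' s'
      = (-(r0 ^ 2 / L0) * a * A) * blk 0 1 p' q' r' s'
        + (r0 ^ 2 * c * C) * blk 2 3 p' q' r' s' := by
    intro p' q' r' s'; simp [RT, ← ha, ← hA, ← hc, ← hC]
  constructor
  · rw [sumEq (RT r0 L0 ξ h)]
    have := keyP m n (-(r0 ^ 2 / L0) * a * A) (r0 ^ 2 * c * C) dv (fun _ => 0) p q r s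
    simp only [diag4] at this
    simp only [RTeq]
    simpa using this
  · rw [sumEq (PT r0 L0 ξ h)]
    have PTeq : ∀ p' q' r' s' : Fin 4, PT r0 L0 ξ h x p' q' r' s'
        = (-(r0 ^ 2 / L0) * a * A) * blk 0 1 p' q' r' s'
          + (r0 ^ 2 * c * C) * blk 2 3 p' q' r' s'
          + (1/3) * (diag4 dv p' s' * diag4 ev q' r' - diag4 dv q' s' * diag4 ev p' r') := by
      intro p' q' r' s'
      simp only [PT, RTeq, gTeq, Seq]; try ring
    simp only [PTeq]
    have := keyP m n (-(r0 ^ 2 / L0) * a * A) (r0 ^ 2 * c * C) dv ev p q r s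
    linarith [this]
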